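/- (Belt lemma.) Let T = τ₀…τ_{L−1} be the sequence of transition pairs of the run ρ_min of a minimal witness. Suppose there are indices 0 < i < k < L−1 such that the sub-run τ_i…τ_k(c_i) is included in a single belt and either m_{c_i} = m_{c_k} or n_{c_i} = n_{c_k} (the first, respectively second, counters agree at the endpoints). Then for every i ≤ r ≤ k, the counter effects satisfy ce(τ_i…τ_r)|₁ ≤ 2((K²·P₂(K))² + 1) and ce(τ_i…τ_r)|₂ ≤ 2((K²·P₂(K))² + 1), where P₂(K) = 6K⁴. -/

import Mathlib

/-- A deterministic weighted real-time one-counter automaton (dwROCA) over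
alphabet `A` and field `S`.  `next q b a`, `upd q b a`, `wt q b a` give the
target state, counter update and (nonzero) weight of the unique transition
from state `q` reading letter `a` with counter-status `b` (`true` = counter is
zero). -/
structure DWROCA (A : Type) (S : Type) [Field S] where
  Q : Type
  fin : Fintype Q
  q0 : Q
  s0 : S
  s0_ne : s0 ≠ 0
  next : Q → Bool → A → Q
  upd : Q → Bool → A → ℤ
  wt : Q → Bool → A → S
  upd_mem : ∀ q b a, upd q b a ∈ ({-1, 0, 1} : Set ℤ)
  no_dec_on_zero : ∀ q a, upd q true a ≠ -1
  wt_ne : ∀ q b a, wt q b a ≠ 0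

attribute [instance] DWROCA.fin

/-- Configurations: a state, a counter value and a weight. -/
abbrev DWROCA.Cfg {A S : Type} [Field S] (M : DWROCA A S) : Type := M.Q × ℕ × S

variable {A S : Type} [Field S]

/-- One step of a dwROCA on a configuration. -/
def DWROCA.step (M : DWROCA A S) (c : M.Cfg) (x : A) : M.Cfg :=
  (M.next c.1 (decide (c.2.1 = 0)) x,
   ((c.2.1 : ℤ) + M.upd c.1 (decide (c.2.1 = 0)) x).toNat,
   c.2.2 * M.wt c.1 (decide (c.2.1 = 0)) x)

/-- The run of a dwROCA on a word from a configuration. -/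
def DWROCA.run (M : DWROCA A S) (c : M.Cfg) (w : List A) : M.Cfg :=
  w.foldl M.step c

/-- `f(w, c)`: the value assigned to the word `w` by the configuration `c`. -/
def DWROCA.val (M : DWROCA A S) (c : M.Cfg) (w : List A) : S :=
  (M.run c w).2.2

/-- The initial configuration. -/
def DWROCA.init (M : DWROCA A S) : M.Cfg := (M.q0, 0, M.s0)

/-- The function `f_A : Σ* → S` computed by a dwROCA. -/
def DWROCA.f (M : DWROCA A S) (w : List A) : S := M.val M.init w

/-- One step of the underlying uninitialised weighted automaton `uwa(M)`:
the counter is ignored (nonzero tests are always taken).  Its configurations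
are pairs (state, weight). -/
def DWROCA.ustep (M : DWROCA A S) (c : M.Q × S) (x : A) : M.Q × S :=
  (M.next c.1 false x, c.2 * M.wt c.1 false x)

/-- The value assigned to a word by a configuration of `uwa(M)`. -/
def DWROCA.uval (M : DWROCA A S) (c : M.Q × S) (w : List A) : S :=
  (w.foldl M.ustep c).2

/-- `k`-equivalence of configurations of two dwROCAs. -/
def kEquiv (M N : DWROCA A S) (c : M.Cfg) (d : N.Cfg) (k : ℕ) : Prop :=
  ∀ w : List A, w.length ≤ k → M.val c w = N.val d w

/-- `k`-equivalence of a configuration of `M` with a configuration of the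
underlying weighted automaton `uwa(N)`. -/
def kEquivU (M N : DWROCA A S) (c : M.Cfg) (d : N.Q × S) (k : ℕ) : Prop :=
  ∀ w : List A, w.length ≤ k → M.val c w = N.uval d w

/-- Membership in `NWA` (relative to the pair `A₁`, `A₂`): a configuration of
`M` (where `M` is `A₁` or `A₂`) not `K`-equivalent to any configuration of
`uwa(A₁) ∪ uwa(A₂)`. -/
def inNWA (A₁ A₂ M : DWROCA A S) (c : M.Cfg) (K : ℕ) : Prop :=
  (∀ d : A₁.Q × S, ¬ kEquivU M A₁ c d K) ∧ (∀ d : A₂.Q × S, ¬ kEquivU M A₂ c d K)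

/-- `dist(c)`: least length of a word taking `c` into `NWA` (`⊤` if none). -/
noncomputable def distNWA (A₁ A₂ M : DWROCA A S) (c : M.Cfg) (K : ℕ) : ℕ∞ :=
  sInf {n : ℕ∞ | ∃ w : List A, (w.length : ℕ∞) = n ∧ inNWA A₁ A₂ M (M.run c w) K}

/-- A configuration pair is surely-equivalent if the two configurations are
`K`-equivalent and both have infinite distance to `NWA`. -/
def surelyEq (A₁ A₂ : DWROCA A S) (c : A₁.Cfg) (d : A₂.Cfg) (K : ℕ) : Prop :=
  kEquiv A₁ A₂ c d K ∧ distNWA A₁ A₂ A₁ c K = ⊤ ∧ distNWA A₁ A₂ A₂ d K = ⊤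

/-- A configuration pair is surely-nonequivalent if the two configurations are
not `K`-equivalent or have different distances to `NWA`. -/
def surelyNonEq (A₁ A₂ : DWROCA A S) (c : A₁.Cfg) (d : A₂.Cfg) (K : ℕ) : Prop :=
  ¬ kEquiv A₁ A₂ c d K ∨ distNWA A₁ A₂ A₁ c K ≠ distNWA A₁ A₂ A₂ d K

/-- A configuration pair is unresolved if the configurations are `K`-equivalent
and have equal finite distances to `NWA`. -/
def unresolved (A₁ A₂ : DWROCA A S) (c : A₁.Cfg) (d : A₂.Cfg) (K : ℕ) : Prop :=
  kEquiv A₁ A₂ c d K ∧ distNWA A₁ A₂ A₁ c K = distNWA A₁ A₂ A₂ d K ∧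
    distNWA A₁ A₂ A₁ c K ≠ ⊤

/-- `w` is a minimal-length witness distinguishing `A₁` and `A₂`. -/
def IsMinWitness (A₁ A₂ : DWROCA A S) (w : List A) : Prop :=
  A₁.f w ≠ A₂.f w ∧ ∀ v : List A, A₁.f v ≠ A₂.f v → w.length ≤ v.length

/-- The `i`-th configuration pair `c_i` of the run of `w` from the initial
configuration pair. -/
def pairAt (A₁ A₂ : DWROCA A S) (w : List A) (i : ℕ) : A₁.Cfg × A₂.Cfg :=
  (A₁.run A₁.init (w.take i), A₂.run A₂.init (w.take i))

/-- Applying a sequence of transition pairs (determined, by determinism, by a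
word) to a configuration pair. -/
def runPair (A₁ A₂ : DWROCA A S) (c : A₁.Cfg × A₂.Cfg) (w : List A) :
    A₁.Cfg × A₂.Cfg :=
  (A₁.run c.1 w, A₂.run c.2 w)

/-- A configuration pair lies in the belt of slope `α/β` and thickness `d`. -/
def inBelt (α β d : ℕ) {A₁ A₂ : DWROCA A S} (c : A₁.Cfg × A₂.Cfg) : Prop :=
  |(α : ℤ) * (c.1.2.1 : ℤ) - (β : ℤ) * (c.2.2.1 : ℤ)| ≤ (d : ℤ)

/-- Two configuration pairs are `(α/β)`-related: same state pairs and same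
value of `α·m - β·n`. -/
def abRelated (α β : ℕ) {A₁ A₂ : DWROCA A S} (c c' : A₁.Cfg × A₂.Cfg) : Prop :=
  c.1.1 = c'.1.1 ∧ c.2.1 = c'.2.1 ∧
    (α : ℤ) * (c.1.2.1 : ℤ) - (β : ℤ) * (c.2.2.1 : ℤ) =
      (α : ℤ) * (c'.1.2.1 : ℤ) - (β : ℤ) * (c'.2.2.1 : ℤ)

section BeltAux
variable {A S : Type} [Field S] {M : DWROCA A S}

lemma run_nil (c : M.Cfg) : M.run c [] = c := rfl
lemma run_cons (c : M.Cfg) (x : A) (v : List A) :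
    M.run c (x :: v) = M.run (M.step c x) v := rfl
lemma run_append (c : M.Cfg) (v₁ v₂ : List A) :
    M.run c (v₁ ++ v₂) = M.run (M.run c v₁) v₂ :=
  List.foldl_append ..

/-- Weight-splitting: state and counter do not depend on the starting weight,
and the weight factors. -/
lemma run_split (v : List A) : ∀ (c : M.Cfg),
    M.run c v = ((M.run (c.1, c.2.1, 1) v).1, (M.run (c.1, c.2.1, 1) v).2.1,
      c.2.2 * (M.run (c.1, c.2.1, 1) v).2.2) := by
  induction v with
  | nil => intro c; simp [run_nil]
  | cons x v ih =>
    intro c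
    rw [run_cons, run_cons, ih (M.step c x), ih (M.step (c.1, c.2.1, 1) x)]
    simp only [DWROCA.step]
    ring_nf
lemma run_wt_ne_zero (v : List A) : ∀ (c : M.Cfg), c.2.2 ≠ 0 → (M.run c v).2.2 ≠ 0 := by
  induction v with
  | nil => intro c h; exact h
  | cons x v ih =>
    intro c h
    rw [run_cons]
    exact ih _ (mul_ne_zero h (M.wt_ne _ _ _))

lemma upd_bounds (q : M.Q) (b : Bool) (x : A) :
    -1 ≤ M.upd q b x ∧ M.upd q b x ≤ 1 := by
  have := M.upd_mem q b x
  simp only [Set.mem_insert_iff, Set.mem_singleton_iff] at this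
  rcases this with h | h | h <;> (rw [h]; exact ⟨by norm_num, by norm_num⟩)

lemma step_counter (c : M.Cfg) (x : A) :
    ∃ u : ℤ, -1 ≤ u ∧ u ≤ 1 ∧ ((M.step c x).2.1 : ℤ) = (c.2.1 : ℤ) + u := by
  refine ⟨M.upd c.1 (decide (c.2.1 = 0)) x, (upd_bounds _ _ _).1, (upd_bounds _ _ _).2, ?_⟩
  show (((c.2.1 : ℤ) + _).toNat : ℤ) = _
  rw [Int.toNat_of_nonneg]
  have hb := upd_bounds (M := M) c.1 (decide (c.2.1 = 0)) x
  rcases Nat.eq_zero_or_pos c.2.1 with h0 | h0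
  · have hne := M.no_dec_on_zero c.1 x
    rw [h0]
    simp only [decide_true]
    rw [h0] at hb
    simp only [decide_true] at hb
    omega
  · omega

/-- The shift lemma: if along the run the counter always stays `> δ`
(including at the end), the whole run can be shifted down by `δ`. -/
lemma run_shift (δ : ℕ) (v : List A) : ∀ (q : M.Q) (m : ℕ),
    (∀ j, j ≤ v.length → δ < (M.run (q, m, (1:S)) (v.take j)).2.1) →
    M.run (q, m - δ, (1:S)) v = ((M.run (q, m, (1:S)) v).1,
      (M.run (q, m, (1:S)) v).2.1 - δ, (M.run (q, m, (1:S)) v).2.2) := by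
  induction v with
  | nil =>
    intro q m h
    have h0 := h 0 (by simp)
    simp only [List.take_zero, run_nil] at h0 ⊢
  | cons x v ih =>
    intro q m h
    have h0 : δ < m := by simpa [run_nil] using h 0 (by simp)
    have hm0 : ¬ (m = 0) := by omega
    have hmδ0 : ¬ (m - δ = 0) := by omega
    have hu := upd_bounds (M := M) q false x
    set u := M.upd q false x with hu_def
    set q₁ := M.next q false x with hq₁
    set wt := M.wt q false x with hwt
    have hstep : M.step (q, m, (1:S)) x = (q₁, ((m : ℤ) + u).toNat, 1 * wt) := by
      simp only [DWROCA.step, hm0, decide_false]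
      rfl
    have hmint : (0:ℤ) ≤ (m:ℤ) + u := by omega
    set m₁ : ℕ := ((m : ℤ) + u).toNat with hm₁
    have hm₁' : (m₁ : ℤ) = (m : ℤ) + u := Int.toNat_of_nonneg hmint
    have hstep' : M.step (q, m - δ, (1:S)) x = (q₁, m₁ - δ, 1 * wt) := by
      simp only [DWROCA.step, hmδ0, decide_false, Prod.mk.injEq]
      refine ⟨rfl, ?_, rfl⟩
      omega
    -- counter after one step is still > δ
    have h1 : δ < m₁ := by
      have := h 1 (by simp)
      simpa [List.take_succ_cons, run_cons, hstep, run_nil] using this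
    -- hypothesis for ih
    have hih : ∀ j, j ≤ v.length → δ < (M.run (q₁, m₁, (1:S)) (v.take j)).2.1 := by
      intro j hj
      have := h (j+1) (by simpa using Nat.succ_le_succ hj)
      rw [List.take_succ_cons, run_cons, hstep, run_split (v.take j)] at this
      simpa using this
    rw [run_cons, run_cons, hstep, hstep',
      run_split v (q₁, m₁ - δ, 1 * wt), run_split v (q₁, m₁, 1 * wt), ih q₁ m₁ hih]
/-- Discrete upward crossing: last up-crossing of level `h` before `r`. -/
lemma up_crossing (f : ℕ → ℤ) (hstep : ∀ t, f (t+1) ≤ f t + 1)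
    (i r : ℕ) (hir : i ≤ r) (h : ℤ) (hi : f i < h) (hr : h ≤ f r) :
    ∃ u, i < u ∧ u ≤ r ∧ f u = h ∧ ∀ s, u ≤ s → s ≤ r → h ≤ f s := by
  classical
  set P : ℕ → Prop := fun j => f (i + j) < h with hP
  have hP0 : P 0 := by simpa [hP] using hi
  have hPN : ¬ P (r - i) := by simp only [hP]; rw [Nat.add_sub_cancel' hir]; omega
  set g := Nat.findGreatest P (r - i) with hg
  have hPg : P g := Nat.findGreatest_spec (Nat.zero_le _) hP0
  have hgle : g ≤ r - i := Nat.findGreatest_le _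
  have hglt : g < r - i := lt_of_le_of_ne hgle (fun e => hPN (e ▸ hPg))
  have hmono : ∀ s, i + g < s → s ≤ r → h ≤ f s := by
    intro s hs1 hs2
    have : ¬ P (s - i) := Nat.findGreatest_is_greatest (n := r - i) (k := s - i) (by omega) (by omega)
    simp only [hP] at this
    rw [Nat.add_sub_cancel' (by omega : i ≤ s)] at this
    omega
  refine ⟨i + g + 1, by omega, by omega, ?_, fun s hs1 hs2 => hmono s (by omega) hs2⟩
  have h1 : h ≤ f (i + g + 1) := hmono _ (by omega) (by omega)
  have h2 : f (i + g + 1) ≤ f (i + g) + 1 := hstep _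
  simp only [hP] at hPg
  omega

/-- Discrete downward crossing: first down-crossing of level `h` after `r`. -/
lemma down_crossing (f : ℕ → ℤ) (hstep : ∀ t, f t ≤ f (t+1) + 1)
    (r k : ℕ) (hrk : r ≤ k) (h : ℤ) (hr : h ≤ f r) (hk : f k < h) :
    ∃ d, r ≤ d ∧ d < k ∧ f d = h ∧ ∀ s, r ≤ s → s ≤ d → h ≤ f s := by
  classical
  have hex : ∃ j, f (r + j) < h := ⟨k - r, by rw [Nat.add_sub_cancel' hrk]; omega⟩
  set j₀ := Nat.find hex with hj₀
  have hj₀spec : f (r + j₀) < h := Nat.find_spec hex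
  have hj₀le : j₀ ≤ k - r := Nat.find_min' hex (by rw [Nat.add_sub_cancel' hrk]; omega)
  have hj₀pos : 0 < j₀ := by
    rcases Nat.eq_zero_or_pos j₀ with h0 | h0
    · rw [h0] at hj₀spec; simp at hj₀spec; omega
    · exact h0
  have habove : ∀ s, r ≤ s → s ≤ r + j₀ - 1 → h ≤ f s := by
    intro s hs1 hs2
    have : ¬ f (r + (s - r)) < h := Nat.find_min hex (by omega)
    rw [Nat.add_sub_cancel' hs1] at this
    omega
  refine ⟨r + j₀ - 1, by omega, by omega, ?_, habove⟩
  have h1 : h ≤ f (r + j₀ - 1) := habove _ (by omega) le_rfl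
  have h2 : f (r + j₀ - 1) ≤ f (r + j₀ - 1 + 1) + 1 := hstep _
  have : r + j₀ - 1 + 1 = r + j₀ := by omega
  rw [this] at h2
  omega

lemma exists_three_lt (s : Finset ℤ) (h : 2 < s.card) :
    ∃ a ∈ s, ∃ b ∈ s, ∃ c ∈ s, a < b ∧ b < c := by
  have h1 : s.Nonempty := Finset.card_pos.mp (by omega)
  set a := s.min' h1 with ha
  have haa : a ∈ s := s.min'_mem h1
  set s' := s.erase a with hs'
  have hcard' : 1 < s'.card := by
    have := Finset.card_erase_of_mem haa
    rw [← hs'] at this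
    omega
  have h2 : s'.Nonempty := Finset.card_pos.mp (by omega)
  set b := s'.min' h2 with hb
  have hbb' : b ∈ s' := s'.min'_mem h2
  have hbb : b ∈ s := Finset.mem_of_mem_erase hbb'
  set s'' := s'.erase b with hs''
  have hcard'' : 0 < s''.card := by
    have := Finset.card_erase_of_mem hbb'
    rw [← hs''] at this
    omega
  have h3 : s''.Nonempty := Finset.card_pos.mp hcard''
  set c := s''.min' h3 with hc
  have hcc'' : c ∈ s'' := s''.min'_mem h3
  have hcc' : c ∈ s' := Finset.mem_of_mem_erase hcc''
  have hcc : c ∈ s := Finset.mem_of_mem_erase hcc'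
  refine ⟨a, haa, b, hbb, c, hcc, ?_, ?_⟩
  · exact lt_of_le_of_ne (s.min'_le b hbb) (Finset.ne_of_mem_erase hbb').symm
  · exact lt_of_le_of_ne (s'.min'_le c hcc') (Finset.ne_of_mem_erase hcc'').symm
lemma run_take_succ (c : M.Cfg) (w : List A) (t : ℕ) :
    M.run c (w.take (t+1)) = M.run (M.run c (w.take t)) (w[t]?.toList) := by
  rw [List.take_succ, run_append]

lemma run_take_step (c : M.Cfg) (w : List A) (t : ℕ) :
    ∃ u : ℤ, -1 ≤ u ∧ u ≤ 1 ∧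
      ((M.run c (w.take (t+1))).2.1 : ℤ) = ((M.run c (w.take t)).2.1 : ℤ) + u := by
  rw [run_take_succ]
  cases h : w[t]? with
  | none => exact ⟨0, by norm_num, by norm_num, by simp [run_nil]⟩
  | some x =>
    simp only [Option.toList]
    obtain ⟨u, h1, h2, h3⟩ := step_counter (M := M) (M.run c (w.take t)) x
    exact ⟨u, h1, h2, by rwa [run_cons, run_nil]⟩

lemma run_take_seg (c : M.Cfg) (w : List A) {u d : ℕ} (hud : u ≤ d) :
    M.run (M.run c (w.take u)) ((w.take d).drop u) = M.run c (w.take d) := by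
  conv_rhs => rw [← List.take_append_drop u (w.take d)]
  rw [run_append, List.take_take, min_eq_left hud]

lemma seg_take (w : List A) {u d j : ℕ} (hj : u + j ≤ d) :
    ((w.take d).drop u).take j = (w.take (u + j)).drop u := by
  rw [List.take_drop, List.take_take, min_eq_left hj]
lemma arith_main (a b K D : ℕ) (ha : 1 ≤ a) (hb : 1 ≤ b) (hK : K = a + b) (hD : D = 6*K^4) :
    ((a * (b * (2 * D + 1)) * (a * (b * (2 * D + 1))) * 2 : ℕ) : ℤ)
      < 2*(((K:ℤ)^2*(6*(K:ℤ)^4))^2+1) - 3*(D:ℤ) := by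
  have hKz : (2:ℤ) ≤ (K:ℤ) := by exact_mod_cast (by omega : 2 ≤ K)
  have hDz : (D:ℤ) = 6*(K:ℤ)^4 := by rw [hD]; push_cast; ring
  have hab : 4*((a:ℤ)*b) ≤ (K:ℤ)^2 := by
    have hKab : (K:ℤ) = (a:ℤ)+b := by exact_mod_cast hK
    nlinarith [sq_nonneg ((a:ℤ)-b)]
  have h2 : (4:ℤ) ≤ (K:ℤ)^2 := by nlinarith
  have hK4 : (16:ℤ) ≤ (K:ℤ)^4 := by nlinarith [h2]
  have hKnn4 : (0:ℤ) ≤ (K:ℤ)^4 := by positivity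
  have hKnn8 : (0:ℤ) ≤ (K:ℤ)^8 := by positivity
  have h4' : 16*(K:ℤ)^4 ≤ (K:ℤ)^8 := by nlinarith [mul_le_mul_of_nonneg_right hK4 hKnn4]
  have h8 : 16*(K:ℤ)^8 ≤ (K:ℤ)^12 := by nlinarith [mul_le_mul_of_nonneg_right hK4 hKnn8]
  have habnn : (0:ℤ) ≤ 4*((a:ℤ)*b) := by positivity
  have h4 : (4*((a:ℤ)*b)) * (4*((a:ℤ)*b)) ≤ (K:ℤ)^2*((K:ℤ)^2) := mul_self_le_mul_self habnn hab
  have h5 : ((4*((a:ℤ)*b)) * (4*((a:ℤ)*b))) * ((2*(D:ℤ)+1)*(2*(D:ℤ)+1)) ≤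
      ((K:ℤ)^2*((K:ℤ)^2)) * ((2*(D:ℤ)+1)*(2*(D:ℤ)+1)) :=
    mul_le_mul_of_nonneg_right h4 (by positivity)
  rw [hDz] at h5
  push_cast
  rw [hDz]
  nlinarith [h5, h8, h4']
/-- Abstract cut-and-splice for a single automaton. -/
lemma cut_run (c1 c2 c3 c4 : M.Cfg) (mid suf : List A) (δ : ℕ)
    (hst12 : c1.1 = c2.1) (hcnt12 : c1.2.1 = c2.2.1 - δ)
    (h3 : M.run c2 mid = c3)
    (hst34 : c3.1 = c4.1) (hcnt34 : c4.2.1 = c3.2.1 - δ)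
    (hcnt : ∀ j, j ≤ mid.length → δ < (M.run (c2.1, c2.2.1, (1:S)) (mid.take j)).2.1) :
    ∃ X Y : S, (M.run (M.run c1 mid) suf).2.2 = c1.2.2 * X * Y ∧
      c3.2.2 = c2.2.2 * X ∧ (M.run c4 suf).2.2 = c4.2.2 * Y := by
  set Z := M.run (c2.1, c2.2.1, (1:S)) mid with hZ
  refine ⟨Z.2.2, (M.run (c4.1, c4.2.1, (1:S)) suf).2.2, ?_, ?_, ?_⟩
  · have hsh := run_shift (M := M) δ mid c2.1 c2.2.1 hcnt
    rw [← hZ] at hsh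
    have hmid : M.run c1 mid = (c4.1, c4.2.1, c1.2.2 * Z.2.2) := by
      have hc1 : M.run c1 mid = ((M.run (c1.1, c1.2.1, (1:S)) mid).1,
          (M.run (c1.1, c1.2.1, (1:S)) mid).2.1,
          c1.2.2 * (M.run (c1.1, c1.2.1, (1:S)) mid).2.2) := run_split mid c1
      have hcfg : (c1.1, c1.2.1, (1:S)) = (c2.1, c2.2.1 - δ, (1:S)) := by
        rw [hst12, hcnt12]
      rw [hcfg, hsh] at hc1
      have hZ1 : Z.1 = c4.1 := by
        have := run_split mid c2
        rw [h3, ← hZ] at this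
        rw [← hst34, this]
      have hZ2 : Z.2.1 - δ = c4.2.1 := by
        have := run_split mid c2
        rw [h3, ← hZ] at this
        rw [hcnt34, this]
      rw [hc1, hZ1, hZ2]
    rw [hmid, run_split suf (c4.1, c4.2.1, c1.2.2 * Z.2.2)]
  · have := run_split mid c2
    rw [h3, ← hZ] at this
    rw [this]
  · rw [run_split suf c4]
/-- The cut-out equality: cutting out the pieces `[ua,ub)` and `[db,da)` of the
run of a minimal witness yields a shorter word, which by minimality is not a
witness; this gives a multiplicative relation among the weights. -/
lemma cut_eq (A₁ A₂ : DWROCA A S) (w : List A) (hw : IsMinWitness A₁ A₂ w)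
    (α β D : ℕ) (hβ : 1 ≤ β) (i k : ℕ)
    (hbelt : ∀ r, i ≤ r → r ≤ k → inBelt α β D (pairAt A₁ A₂ w r))
    (ua ub db da : ℕ)
    (hiua : i ≤ ua) (hab : ua < ub) (hbd : ub ≤ db) (hdd : db < da) (hdak : da ≤ k)
    (hlen : da < w.length)
    (hstu1 : (pairAt A₁ A₂ w ua).1.1 = (pairAt A₁ A₂ w ub).1.1)
    (hstu2 : (pairAt A₁ A₂ w ua).2.1 = (pairAt A₁ A₂ w ub).2.1)
    (hoffu : (α:ℤ) * (pairAt A₁ A₂ w ua).1.2.1 - β * (pairAt A₁ A₂ w ua).2.2.1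
           = (α:ℤ) * (pairAt A₁ A₂ w ub).1.2.1 - β * (pairAt A₁ A₂ w ub).2.2.1)
    (hstd1 : (pairAt A₁ A₂ w db).1.1 = (pairAt A₁ A₂ w da).1.1)
    (hstd2 : (pairAt A₁ A₂ w db).2.1 = (pairAt A₁ A₂ w da).2.1)
    (hoffd : (α:ℤ) * (pairAt A₁ A₂ w db).1.2.1 - β * (pairAt A₁ A₂ w db).2.2.1
           = (α:ℤ) * (pairAt A₁ A₂ w da).1.2.1 - β * (pairAt A₁ A₂ w da).2.2.1)
    (hmad : (pairAt A₁ A₂ w ua).1.2.1 = (pairAt A₁ A₂ w da).1.2.1)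
    (hmbd : (pairAt A₁ A₂ w ub).1.2.1 = (pairAt A₁ A₂ w db).1.2.1)
    (hmab : (pairAt A₁ A₂ w ua).1.2.1 < (pairAt A₁ A₂ w ub).1.2.1)
    (hmint : ∀ t, ub ≤ t → t ≤ db →
      (pairAt A₁ A₂ w ub).1.2.1 ≤ (pairAt A₁ A₂ w t).1.2.1)
    (hpos : (D:ℤ) < α * (pairAt A₁ A₂ w ua).1.2.1) :
    (pairAt A₁ A₂ w ua).1.2.2 * (pairAt A₁ A₂ w db).1.2.2 * A₁.f w *
      ((pairAt A₁ A₂ w ub).2.2.2 * (pairAt A₁ A₂ w da).2.2.2) =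
    (pairAt A₁ A₂ w ua).2.2.2 * (pairAt A₁ A₂ w db).2.2.2 * A₂.f w *
      ((pairAt A₁ A₂ w ub).1.2.2 * (pairAt A₁ A₂ w da).1.2.2) := by
  classical
  set mid : List A := (w.take db).drop ub with hmid_def
  set suf : List A := w.drop da with hsuf_def
  -- abbreviations for counters
  set ma : ℕ := (pairAt A₁ A₂ w ua).1.2.1 with hma
  set mb : ℕ := (pairAt A₁ A₂ w ub).1.2.1 with hmb
  set na : ℕ := (pairAt A₁ A₂ w ua).2.2.1 with hna
  set nb : ℕ := (pairAt A₁ A₂ w ub).2.2.1 with hnb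
  set δ : ℕ := mb - ma with hδ
  set δ' : ℕ := nb - na with hδ'
  have hmidlen : mid.length ≤ db - ub := by
    simp only [hmid_def, List.length_drop, List.length_take]
    omega
  -- counters along the middle
  have hmaposz : (1:ℤ) ≤ (ma:ℤ) := by
    by_contra hcon
    have : (ma:ℤ) = 0 := by omega
    rw [this, mul_zero] at hpos
    omega
  have hmapos : 1 ≤ ma := by exact_mod_cast hmaposz
  -- δ' as an integer, relation to δ
  have hδδ' : (β:ℤ) * ((nb:ℤ) - na) = (α:ℤ) * ((mb:ℤ) - ma) := by linarith [hoffu]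
  have hβz : (0:ℤ) < (β:ℤ) := by exact_mod_cast hβ
  have hαnn : (0:ℤ) ≤ (α:ℤ) := by positivity
  have hnab : na ≤ nb := by
    by_contra hcon
    have hnbz : (nb:ℤ) < (na:ℤ) := by exact_mod_cast not_le.mp hcon
    have hmabz : (ma:ℤ) < (mb:ℤ) := by exact_mod_cast hmab
    have h1 : (β:ℤ) * ((nb:ℤ) - na) < 0 := mul_neg_of_pos_of_neg hβz (by omega)
    have h2 : (0:ℤ) ≤ (α:ℤ) * ((mb:ℤ) - ma) := mul_nonneg hαnn (by omega)
    linarith [hδδ']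
  have hδ'z : (δ' : ℤ) = (nb:ℤ) - na := by
    rw [hδ']; push_cast [Nat.cast_sub hnab]; ring
  have hδz : (δ : ℤ) = (mb:ℤ) - ma := by
    rw [hδ]; push_cast [Nat.cast_sub (le_of_lt hmab)]; ring
  -- the middle-segment runs hit the original configurations
  have hseg1 : ∀ j, j ≤ mid.length →
      A₁.run (pairAt A₁ A₂ w ub).1 (mid.take j) = (pairAt A₁ A₂ w (ub + j)).1 := by
    intro j hj
    show A₁.run (A₁.run A₁.init (w.take ub)) (mid.take j) = A₁.run A₁.init (w.take (ub + j))
    rw [hmid_def, seg_take w (by omega : ub + j ≤ db)]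
    exact run_take_seg A₁.init w (Nat.le_add_right _ _)
  have hseg2 : ∀ j, j ≤ mid.length →
      A₂.run (pairAt A₁ A₂ w ub).2 (mid.take j) = (pairAt A₁ A₂ w (ub + j)).2 := by
    intro j hj
    show A₂.run (A₂.run A₂.init (w.take ub)) (mid.take j) = A₂.run A₂.init (w.take (ub + j))
    rw [hmid_def, seg_take w (by omega : ub + j ≤ db)]
    exact run_take_seg A₂.init w (Nat.le_add_right _ _)
  -- shift conditions
  have hcnt1 : ∀ j, j ≤ mid.length → δ <
      (A₁.run ((pairAt A₁ A₂ w ub).1.1, (pairAt A₁ A₂ w ub).1.2.1, (1:S)) (mid.take j)).2.1 := by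
    intro j hj
    have h1 : (A₁.run ((pairAt A₁ A₂ w ub).1.1, (pairAt A₁ A₂ w ub).1.2.1, (1:S))
        (mid.take j)).2.1 = (A₁.run (pairAt A₁ A₂ w ub).1 (mid.take j)).2.1 := by
      rw [run_split (mid.take j) (pairAt A₁ A₂ w ub).1]
    rw [h1, hseg1 j hj]
    have := hmint (ub + j) (by omega) (by omega)
    omega
  have hcnt2 : ∀ j, j ≤ mid.length → δ' <
      (A₂.run ((pairAt A₁ A₂ w ub).2.1, (pairAt A₁ A₂ w ub).2.2.1, (1:S)) (mid.take j)).2.1 := by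
    intro j hj
    have h1 : (A₂.run ((pairAt A₁ A₂ w ub).2.1, (pairAt A₁ A₂ w ub).2.2.1, (1:S))
        (mid.take j)).2.1 = (A₂.run (pairAt A₁ A₂ w ub).2 (mid.take j)).2.1 := by
      rw [run_split (mid.take j) (pairAt A₁ A₂ w ub).2]
    rw [h1, hseg2 j hj]
    -- use the belt to bound the second counter from below
    have hbelt' := hbelt (ub + j) (by omega) (by omega)
    rw [inBelt, abs_le] at hbelt'
    have hm' := hmint (ub + j) (by omega) (by omega)
    set mt : ℕ := (pairAt A₁ A₂ w (ub + j)).1.2.1 with hmt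
    set nt : ℕ := (pairAt A₁ A₂ w (ub + j)).2.2.1 with hnt
    have hm'z : (mb:ℤ) ≤ (mt : ℤ) := by exact_mod_cast hm'
    have h6 : (α:ℤ) * mb ≤ (α:ℤ) * mt := mul_le_mul_of_nonneg_left hm'z hαnn
    have h7 : (β:ℤ) * (δ':ℤ) = (α:ℤ) * ((mb:ℤ) - ma) := by rw [hδ'z]; exact hδδ'
    have key : (0:ℤ) < (β:ℤ) * ((nt:ℤ) - δ') := by
      have h8 : (α:ℤ) * ma - D ≤ (β:ℤ) * ((nt:ℤ) - δ') := by
        have hexp : (β:ℤ) * ((nt:ℤ) - δ') = (β:ℤ) * nt - (β:ℤ) * δ' := by ring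
        rw [hexp, h7]
        linarith [hbelt'.1, h6]
      linarith [hpos]
    have hfin : (δ' : ℤ) < (nt : ℤ) := by
      by_contra hcon
      push_neg at hcon
      have : (β:ℤ) * ((nt:ℤ) - δ') ≤ 0 :=
        mul_nonpos_of_nonneg_of_nonpos (le_of_lt hβz) (by omega)
      linarith
    exact_mod_cast hfin
  -- the two cut-run results
  have hublen : ub + mid.length = db := by
    simp only [hmid_def, List.length_drop, List.length_take]
    omega
  have hmidrun1 : A₁.run (pairAt A₁ A₂ w ub).1 mid = (pairAt A₁ A₂ w db).1 := by
    have h := hseg1 mid.length le_rfl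
    rw [List.take_length, hublen] at h
    exact h
  have hmidrun2 : A₂.run (pairAt A₁ A₂ w ub).2 mid = (pairAt A₁ A₂ w db).2 := by
    have h := hseg2 mid.length le_rfl
    rw [List.take_length, hublen] at h
    exact h
  obtain ⟨X₁, Y₁, e1, e2, e3⟩ := cut_run (M := A₁) (pairAt A₁ A₂ w ua).1
    (pairAt A₁ A₂ w ub).1 (pairAt A₁ A₂ w db).1 (pairAt A₁ A₂ w da).1 mid suf δ
    hstu1 (by omega) hmidrun1 hstd1 (by omega) hcnt1
  obtain ⟨X₂, Y₂, e1', e2', e3'⟩ := cut_run (M := A₂) (pairAt A₁ A₂ w ua).2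
    (pairAt A₁ A₂ w ub).2 (pairAt A₁ A₂ w db).2 (pairAt A₁ A₂ w da).2 mid suf δ'
    hstu2 (by omega) hmidrun2 hstd2
    (by -- n da = n db - δ'
      have h1 : (β:ℤ) * (((pairAt A₁ A₂ w db).2.2.1:ℤ) - (pairAt A₁ A₂ w da).2.2.1)
          = (α:ℤ) * (((pairAt A₁ A₂ w db).1.2.1:ℤ) - (pairAt A₁ A₂ w da).1.2.1) := by
        linarith [hoffd]
      have h2 : (((pairAt A₁ A₂ w db).1.2.1:ℤ) - (pairAt A₁ A₂ w da).1.2.1)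
          = (mb:ℤ) - ma := by
        rw [← hmbd, ← hmad]
      rw [h2, ← hδδ'] at h1
      have hβ0 : (β:ℤ) ≠ 0 := by positivity
      have h3 : (((pairAt A₁ A₂ w db).2.2.1:ℤ) - (pairAt A₁ A₂ w da).2.2.1)
          = (nb:ℤ) - na := mul_left_cancel₀ hβ0 h1
      omega)
    hcnt2
  -- the cut word is shorter, so by minimality it is not a witness
  set w' : List A := w.take ua ++ mid ++ suf with hw'
  have hlen' : w'.length < w.length := by
    simp only [hw', hmid_def, hsuf_def, List.length_append, List.length_drop,
      List.length_take]
    omega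
  have hmin : A₁.f w' = A₂.f w' := by
    by_contra hne
    exact absurd (hw.2 w' hne) (by omega)
  have hfw'1 : A₁.f w' = (A₁.run (A₁.run (pairAt A₁ A₂ w ua).1 mid) suf).2.2 := by
    show (A₁.run A₁.init w').2.2 = _
    rw [hw', run_append, run_append]
    rfl
  have hfw'2 : A₂.f w' = (A₂.run (A₂.run (pairAt A₁ A₂ w ua).2 mid) suf).2.2 := by
    show (A₂.run A₂.init w').2.2 = _
    rw [hw', run_append, run_append]
    rfl
  have hfw1 : A₁.f w = (A₁.run (pairAt A₁ A₂ w da).1 suf).2.2 := by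
    show (A₁.run A₁.init w).2.2 = _
    conv_lhs => rw [← List.take_append_drop da w]
    rw [run_append]
    rfl
  have hfw2 : A₂.f w = (A₂.run (pairAt A₁ A₂ w da).2 suf).2.2 := by
    show (A₂.run A₂.init w).2.2 = _
    conv_lhs => rw [← List.take_append_drop da w]
    rw [run_append]
    rfl
  rw [hfw1, hfw2, e3, e3', e2, e2']
  rw [hfw'1, hfw'2, e1, e1'] at hmin
  linear_combination ((pairAt A₁ A₂ w ub).1.2.2 * (pairAt A₁ A₂ w da).1.2.2 *
    (pairAt A₁ A₂ w ub).2.2.2 * (pairAt A₁ A₂ w da).2.2.2) * hmin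
/-- Core pumping bound: inside a belt, the first counter of the run of a
minimal witness cannot rise much above its value at both endpoints. -/
lemma core_bound (A₁ A₂ : DWROCA A S) (K : ℕ)
    (hK : K = Fintype.card A₁.Q + Fintype.card A₂.Q)
    (w : List A) (hw : IsMinWitness A₁ A₂ w)
    (i k : ℕ) (hik : i < k) (hkL : k < w.length - 1)
    (α β : ℕ) (hα : 1 ≤ α) (hβ : 1 ≤ β)
    (hbelt : ∀ r, i ≤ r → r ≤ k → inBelt α β (6 * K ^ 4) (pairAt A₁ A₂ w r)) :
    ∀ r, i ≤ r → r ≤ k → ((pairAt A₁ A₂ w r).1.2.1 : ℤ) ≤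
      max ((pairAt A₁ A₂ w i).1.2.1 : ℤ) ((pairAt A₁ A₂ w k).1.2.1 : ℤ)
      + 2 * (((K : ℤ) ^ 2 * (6 * (K : ℤ) ^ 4)) ^ 2 + 1) - 2 * (6 * (K : ℤ) ^ 4) := by
  classical
  intro r hir hrk
  by_contra hcon
  push_neg at hcon
  set D : ℕ := 6 * K ^ 4 with hD
  have hDz : ((D : ℕ) : ℤ) = 6 * (K : ℤ) ^ 4 := by push_cast [hD]; ring
  set f : ℕ → ℤ := fun t => ((pairAt A₁ A₂ w t).1.2.1 : ℤ) with hf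
  set Mz : ℤ := max ((pairAt A₁ A₂ w i).1.2.1 : ℤ) ((pairAt A₁ A₂ w k).1.2.1 : ℤ)
    with hMz
  set Bz : ℤ := 2 * (((K : ℤ) ^ 2 * (6 * (K : ℤ) ^ 4)) ^ 2 + 1) with hBz
  -- step bounds for the first counter
  have hstepf : ∀ t : ℕ, f (t+1) ≤ f t + 1 ∧ f t ≤ f (t+1) + 1 := by
    intro t
    obtain ⟨u, h1, h2, h3⟩ := run_take_step (M := A₁) A₁.init w t
    have e1 : f (t+1) = ((A₁.run A₁.init (w.take (t+1))).2.1 : ℤ) := rfl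
    have e2 : f t = ((A₁.run A₁.init (w.take t)).2.1 : ℤ) := rfl
    rw [e1, e2]
    omega
  have hMznn : 0 ≤ Mz := le_max_of_le_left (by positivity)
  have hK2 : 2 ≤ K := by
    have h1 : 1 ≤ Fintype.card A₁.Q := Fintype.card_pos_iff.mpr ⟨A₁.q0⟩
    have h2 : 1 ≤ Fintype.card A₂.Q := Fintype.card_pos_iff.mpr ⟨A₂.q0⟩
    omega
  -- the set of heights
  set H : Finset ℤ := Finset.Icc (Mz + D + 1) (Mz + Bz - 2 * D) with hH
  -- crossing points
  have hcross : ∀ h : ℤ, ∃ u d : ℕ,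
      h ∈ H → (i < u ∧ u ≤ r ∧ f u = h ∧ (∀ s, u ≤ s → s ≤ r → h ≤ f s)) ∧
        (r ≤ d ∧ d < k ∧ f d = h ∧ (∀ s, r ≤ s → s ≤ d → h ≤ f s)) := by
    intro h
    by_cases hmem : h ∈ H
    · rw [hH, Finset.mem_Icc] at hmem
      have hfi : f i < h := by
        have : f i ≤ Mz := le_max_left _ _
        have hDnn : (0:ℤ) ≤ (D:ℕ) := by positivity
        omega
      have hfk : f k < h := by
        have : f k ≤ Mz := le_max_right _ _
        have hDnn : (0:ℤ) ≤ (D:ℕ) := by positivity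
        omega
      have hcon' : Mz + Bz - 2 * (6 * (K:ℤ) ^ 4) < f r := hcon
      have hfr : h ≤ f r := by omega
      obtain ⟨u, hu1, hu2, hu3, hu4⟩ :=
        up_crossing f (fun t => (hstepf t).1) i r hir h hfi hfr
      obtain ⟨d, hd1, hd2, hd3, hd4⟩ :=
        down_crossing f (fun t => (hstepf t).2) r k hrk h hfr hfk
      exact ⟨u, d, fun _ => ⟨⟨hu1, hu2, hu3, hu4⟩, ⟨hd1, hd2, hd3, hd4⟩⟩⟩
    · exact ⟨0, 0, fun hmem' => absurd hmem' hmem⟩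
  choose uu dd hcr using hcross
  -- the class map and the pigeonhole target
  set off : ℕ → ℤ := fun t => (α : ℤ) * (pairAt A₁ A₂ w t).1.2.1
    - (β : ℤ) * (pairAt A₁ A₂ w t).2.2.1 with hoff
  set cls : ℤ → (A₁.Q × A₂.Q × ℤ) × (A₁.Q × A₂.Q × ℤ) := fun h =>
    (((pairAt A₁ A₂ w (uu h)).1.1, (pairAt A₁ A₂ w (uu h)).2.1, off (uu h)),
     ((pairAt A₁ A₂ w (dd h)).1.1, (pairAt A₁ A₂ w (dd h)).2.1, off (dd h))) with hcls
  set T : Finset ((A₁.Q × A₂.Q × ℤ) × (A₁.Q × A₂.Q × ℤ)) :=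
    (Finset.univ ×ˢ Finset.univ ×ˢ Finset.Icc (-(D:ℤ)) (D:ℤ)) ×ˢ
    (Finset.univ ×ˢ Finset.univ ×ˢ Finset.Icc (-(D:ℤ)) (D:ℤ)) with hT
  have hmaps : ∀ h ∈ H, cls h ∈ T := by
    intro h hmem
    obtain ⟨⟨hu1, hu2, hu3, hu4⟩, ⟨hd1, hd2, hd3, hd4⟩⟩ := hcr h hmem
    have hbu := hbelt (uu h) (by omega) (by omega)
    have hbd := hbelt (dd h) (by omega) (by omega)
    rw [inBelt, abs_le] at hbu hbd
    simp only [hT, hcls, Finset.mem_product, Finset.mem_univ, Finset.mem_Icc,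
      true_and]
    exact ⟨⟨hbu.1, hbu.2⟩, ⟨hbd.1, hbd.2⟩⟩
  have hIccD : (Finset.Icc (-(D:ℤ)) (D:ℤ)).card = 2 * D + 1 := by
    rw [Int.card_Icc]
    omega
  have hTcard : T.card = (Fintype.card A₁.Q * (Fintype.card A₂.Q * (2 * D + 1))) *
      (Fintype.card A₁.Q * (Fintype.card A₂.Q * (2 * D + 1))) := by
    rw [hT]
    simp only [Finset.card_product, Finset.card_univ, hIccD]
  have hHcard : (T.card * 2 : ℕ) < H.card := by
    rw [hH, Int.card_Icc, Int.lt_toNat, hTcard]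
    have ha : 1 ≤ Fintype.card A₁.Q := Fintype.card_pos_iff.mpr ⟨A₁.q0⟩
    have hb : 1 ≤ Fintype.card A₂.Q := Fintype.card_pos_iff.mpr ⟨A₂.q0⟩
    have harith := arith_main (Fintype.card A₁.Q) (Fintype.card A₂.Q) K D ha hb hK hD
    have hgoal : Mz + Bz - 2*(D:ℤ) + 1 - (Mz + (D:ℤ) + 1) = Bz - 3*(D:ℤ) := by ring
    rw [hgoal, hBz]
    exact harith
  obtain ⟨y, hy, hycard⟩ :=
    Finset.exists_lt_card_fiber_of_mul_lt_card_of_maps_to hmaps hHcard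
  obtain ⟨h₁, hh₁, h₂, hh₂, h₃, hh₃, h12, h23⟩ := exists_three_lt _ hycard
  rw [Finset.mem_filter] at hh₁ hh₂ hh₃
  have hcls12 : cls h₁ = cls h₂ := by rw [hh₁.2, hh₂.2]
  have hcls13 : cls h₁ = cls h₃ := by rw [hh₁.2, hh₃.2]
  have hcls23 : cls h₂ = cls h₃ := by rw [hh₂.2, hh₃.2]
  obtain ⟨⟨hu1i, hu1r, hfu1, hup1⟩, ⟨hd1r, hd1k, hfd1, hdown1⟩⟩ := hcr h₁ hh₁.1
  obtain ⟨⟨hu2i, hu2r, hfu2, hup2⟩, ⟨hd2r, hd2k, hfd2, hdown2⟩⟩ := hcr h₂ hh₂.1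
  obtain ⟨⟨hu3i, hu3r, hfu3, hup3⟩, ⟨hd3r, hd3k, hfd3, hdown3⟩⟩ := hcr h₃ hh₃.1
  simp only [hf] at hfu1 hfu2 hfu3 hfd1 hfd2 hfd3 hup1 hup2 hup3 hdown1 hdown2 hdown3
  -- orderings of the crossing points
  have hu12 : uu h₁ < uu h₂ := by
    by_contra hle
    push_neg at hle
    have := hup2 (uu h₁) hle hu1r
    omega
  have hu23 : uu h₂ < uu h₃ := by
    by_contra hle
    push_neg at hle
    have := hup3 (uu h₂) hle hu2r
    omega
  have hd21 : dd h₂ < dd h₁ := by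
    by_contra hle
    push_neg at hle
    have := hdown2 (dd h₁) hd1r hle
    omega
  have hd32 : dd h₃ < dd h₂ := by
    by_contra hle
    push_neg at hle
    have := hdown3 (dd h₂) hd2r hle
    omega
  -- class components
  simp only [hcls, hoff, Prod.mk.injEq] at hcls12 hcls13 hcls23
  obtain ⟨⟨hU12a, hU12b, hU12c⟩, ⟨hD12a, hD12b, hD12c⟩⟩ := hcls12
  obtain ⟨⟨hU13a, hU13b, hU13c⟩, ⟨hD13a, hD13b, hD13c⟩⟩ := hcls13
  obtain ⟨⟨hU23a, hU23b, hU23c⟩, ⟨hD23a, hD23b, hD23c⟩⟩ := hcls23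
  -- membership bounds on the heights
  rw [hH, Finset.mem_Icc] at hh₁ hh₂ hh₃
  have hDnn : (0:ℤ) ≤ ((D:ℕ):ℤ) := by positivity
  have hαz : (1:ℤ) ≤ (α:ℤ) := by exact_mod_cast hα
  -- positivity of α·m at the lower crossing points
  have hpos1 : ((D:ℕ):ℤ) < (α:ℤ) * (pairAt A₁ A₂ w (uu h₁)).1.2.1 := by
    have hmn : (0:ℤ) ≤ ((pairAt A₁ A₂ w (uu h₁)).1.2.1 : ℤ) := by positivity
    have h1m : ((D:ℕ):ℤ) + 1 ≤ ((pairAt A₁ A₂ w (uu h₁)).1.2.1 : ℤ) := by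
      have := hh₁.1.1
      omega
    have h2m := mul_le_mul_of_nonneg_right hαz hmn
    rw [one_mul] at h2m
    linarith only [h1m, h2m]
  have hpos2 : ((D:ℕ):ℤ) < (α:ℤ) * (pairAt A₁ A₂ w (uu h₂)).1.2.1 := by
    have hmn : (0:ℤ) ≤ ((pairAt A₁ A₂ w (uu h₂)).1.2.1 : ℤ) := by positivity
    have h1m : ((D:ℕ):ℤ) + 1 ≤ ((pairAt A₁ A₂ w (uu h₂)).1.2.1 : ℤ) := by
      have := hh₂.1.1
      omega
    have h2m := mul_le_mul_of_nonneg_right hαz hmn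
    rw [one_mul] at h2m
    linarith only [h1m, h2m]
  -- interval properties
  have hmint2 : ∀ t, uu h₂ ≤ t → t ≤ dd h₂ →
      (pairAt A₁ A₂ w (uu h₂)).1.2.1 ≤ (pairAt A₁ A₂ w t).1.2.1 := by
    intro t ht1 ht2
    rcases le_total t r with hc | hc
    · have := hup2 t ht1 hc
      omega
    · have := hdown2 t hc ht2
      omega
  have hmint3 : ∀ t, uu h₃ ≤ t → t ≤ dd h₃ →
      (pairAt A₁ A₂ w (uu h₃)).1.2.1 ≤ (pairAt A₁ A₂ w t).1.2.1 := by
    intro t ht1 ht2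
    rcases le_total t r with hc | hc
    · have := hup3 t ht1 hc
      omega
    · have := hdown3 t hc ht2
      omega
  -- the three cut-out equalities
  have E12 := cut_eq A₁ A₂ w hw α β D hβ i k hbelt
    (uu h₁) (uu h₂) (dd h₂) (dd h₁)
    (by omega) hu12 (by omega) hd21 (by omega) (by omega)
    hU12a hU12b hU12c hD12a.symm hD12b.symm hD12c.symm
    (by omega) (by omega) (by omega) hmint2 hpos1
  have E23 := cut_eq A₁ A₂ w hw α β D hβ i k hbelt
    (uu h₂) (uu h₃) (dd h₃) (dd h₂)
    (by omega) hu23 (by omega) hd32 (by omega) (by omega)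
    hU23a hU23b hU23c hD23a.symm hD23b.symm hD23c.symm
    (by omega) (by omega) (by omega) hmint3 hpos2
  have E13 := cut_eq A₁ A₂ w hw α β D hβ i k hbelt
    (uu h₁) (uu h₃) (dd h₃) (dd h₁)
    (by omega) (by omega) (by omega) (by omega) (by omega) (by omega)
    hU13a hU13b hU13c hD13a.symm hD13b.symm hD13c.symm
    (by omega) (by omega) (by omega) hmint3 hpos1
  -- weights are nonzero
  set F₁ : S := A₁.f w with hF₁d
  set F₂ : S := A₂.f w with hF₂d
  set A1 : S := (pairAt A₁ A₂ w (uu h₁)).1.2.2 with hA1d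
  set A2 : S := (pairAt A₁ A₂ w (uu h₂)).1.2.2 with hA2d
  set A3 : S := (pairAt A₁ A₂ w (uu h₃)).1.2.2 with hA3d
  set B1 : S := (pairAt A₁ A₂ w (dd h₁)).1.2.2 with hB1d
  set B2 : S := (pairAt A₁ A₂ w (dd h₂)).1.2.2 with hB2d
  set B3 : S := (pairAt A₁ A₂ w (dd h₃)).1.2.2 with hB3d
  set C1 : S := (pairAt A₁ A₂ w (uu h₁)).2.2.2 with hC1d
  set C2 : S := (pairAt A₁ A₂ w (uu h₂)).2.2.2 with hC2d
  set C3 : S := (pairAt A₁ A₂ w (uu h₃)).2.2.2 with hC3d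
  set D1 : S := (pairAt A₁ A₂ w (dd h₁)).2.2.2 with hD1d
  set D2 : S := (pairAt A₁ A₂ w (dd h₂)).2.2.2 with hD2d
  set D3 : S := (pairAt A₁ A₂ w (dd h₃)).2.2.2 with hD3d
  have hA1 : A1 ≠ 0 := run_wt_ne_zero (M := A₁) (w.take (uu h₁)) A₁.init A₁.s0_ne
  have hA2 : A2 ≠ 0 := run_wt_ne_zero (M := A₁) (w.take (uu h₂)) A₁.init A₁.s0_ne
  have hB2 : B2 ≠ 0 := run_wt_ne_zero (M := A₁) (w.take (dd h₂)) A₁.init A₁.s0_ne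
  have hB3 : B3 ≠ 0 := run_wt_ne_zero (M := A₁) (w.take (dd h₃)) A₁.init A₁.s0_ne
  have hC2 : C2 ≠ 0 := run_wt_ne_zero (M := A₂) (w.take (uu h₂)) A₂.init A₂.s0_ne
  have hC3 : C3 ≠ 0 := run_wt_ne_zero (M := A₂) (w.take (uu h₃)) A₂.init A₂.s0_ne
  have hD1 : D1 ≠ 0 := run_wt_ne_zero (M := A₂) (w.take (dd h₁)) A₂.init A₂.s0_ne
  have hD2 : D2 ≠ 0 := run_wt_ne_zero (M := A₂) (w.take (dd h₂)) A₂.init A₂.s0_ne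
  have hF1ne : F₁ ≠ 0 := run_wt_ne_zero (M := A₁) w A₁.init A₁.s0_ne
  have h0 : (A2*B2*C2*D2) * (A1*B3*F₁*(C3*D1)*F₁)
      = (A2*B2*C2*D2) * (C1*D3*F₂*(A3*B1)*F₂) := by
    linear_combination (A2*B3*F₁*(C3*D2)) * E12 + (C1*D2*F₂*(A2*B1)) * E23
  have h1 : A1*B3*F₁*(C3*D1)*F₁ = C1*D3*F₂*(A3*B1)*F₂ :=
    mul_left_cancel₀
      (mul_ne_zero (mul_ne_zero (mul_ne_zero hA2 hB2) hC2) hD2) h0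
  have h2 : (A1*B3*C3*D1*F₁) * F₁ = (A1*B3*C3*D1*F₁) * F₂ := by
    linear_combination h1 - F₂ * E13
  exact hw.1 (mul_left_cancel₀
    (mul_ne_zero (mul_ne_zero (mul_ne_zero (mul_ne_zero hA1 hB3) hC3) hD1) hF1ne) h2)

end BeltAux

/-- belt lemma: in the run of a minimal witness, if the sub-run
from `c_i` to `c_k` stays inside a single belt and the first (or second)
counters agree at the endpoints, then all counter effects along the sub-run
are bounded by `2·((K²·6K⁴)² + 1)`. -/
theorem belt_lemma {A S : Type} [Field S]
    (A₁ A₂ : DWROCA A S) (K : ℕ)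
    (hK : K = Fintype.card A₁.Q + Fintype.card A₂.Q)
    (w : List A) (hw : IsMinWitness A₁ A₂ w)
    (i k : ℕ) (h0i : 0 < i) (hik : i < k) (hkL : k < w.length - 1)
    (hbelt : ∃ α β : ℕ, 1 ≤ α ∧ α ≤ K ^ 2 ∧ 1 ≤ β ∧ β ≤ K ^ 2 ∧ Nat.Coprime α β ∧
      ∀ r, i ≤ r → r ≤ k → inBelt α β (6 * K ^ 4) (pairAt A₁ A₂ w r))
    (hend : (pairAt A₁ A₂ w i).1.2.1 = (pairAt A₁ A₂ w k).1.2.1 ∨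
            (pairAt A₁ A₂ w i).2.2.1 = (pairAt A₁ A₂ w k).2.2.1) :
    ∀ r, i ≤ r → r ≤ k →
      ((pairAt A₁ A₂ w r).1.2.1 : ℤ) - ((pairAt A₁ A₂ w i).1.2.1 : ℤ) ≤
        2 * ((K ^ 2 * (6 * K ^ 4) : ℤ) ^ 2 + 1) ∧
      ((pairAt A₁ A₂ w r).2.2.1 : ℤ) - ((pairAt A₁ A₂ w i).2.2.1 : ℤ) ≤
        2 * ((K ^ 2 * (6 * K ^ 4) : ℤ) ^ 2 + 1) := by
  obtain ⟨α, β, hα1, hαK, hβ1, hβK, hcop, hbelt'⟩ := hbelt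
  have hw' : IsMinWitness A₂ A₁ w := ⟨Ne.symm hw.1, fun v hv => hw.2 v (Ne.symm hv)⟩
  have hK' : K = Fintype.card A₂.Q + Fintype.card A₁.Q := by omega
  have hbelt2 : ∀ r, i ≤ r → r ≤ k → inBelt β α (6 * K ^ 4) (pairAt A₂ A₁ w r) := by
    intro r h1 h2
    have h3 := hbelt' r h1 h2
    rw [inBelt] at h3 ⊢
    show |(β:ℤ) * ((pairAt A₁ A₂ w r).2.2.1 : ℤ)
      - (α:ℤ) * ((pairAt A₁ A₂ w r).1.2.1 : ℤ)| ≤ _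
    rw [abs_sub_comm]
    exact h3
  have core1 := core_bound A₁ A₂ K hK w hw i k hik hkL α β hα1 hβ1 hbelt'
  have core2 : ∀ r, i ≤ r → r ≤ k → ((pairAt A₁ A₂ w r).2.2.1 : ℤ) ≤
      max ((pairAt A₁ A₂ w i).2.2.1 : ℤ) ((pairAt A₁ A₂ w k).2.2.1 : ℤ)
      + 2 * (((K : ℤ) ^ 2 * (6 * (K : ℤ) ^ 4)) ^ 2 + 1) - 2 * (6 * (K : ℤ) ^ 4) :=
    core_bound A₂ A₁ K hK' w hw' i k hik hkL β α hβ1 hα1 hbelt2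
  intro r hir hrk
  have hD0 : (0:ℤ) ≤ 6 * (K:ℤ) ^ 4 := by positivity
  have hc1 := core1 r hir hrk
  have hc2 := core2 r hir hrk
  have hcast : ((6 * K ^ 4 : ℕ) : ℤ) = 6 * (K:ℤ) ^ 4 := by push_cast; ring
  have hβz : (1:ℤ) ≤ (β:ℤ) := by exact_mod_cast hβ1
  have hαz : (1:ℤ) ≤ (α:ℤ) := by exact_mod_cast hα1
  have hbi := hbelt' i le_rfl (le_of_lt hik)
  have hbk := hbelt' k (le_of_lt hik) le_rfl
  rw [inBelt, abs_le, hcast] at hbi hbk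
  rcases hend with hend | hend
  · have hendz : ((pairAt A₁ A₂ w i).1.2.1 : ℤ) = ((pairAt A₁ A₂ w k).1.2.1 : ℤ) := by
      exact_mod_cast hend
    rw [← hendz, max_self] at hc1
    rw [← hendz] at hbk
    constructor
    · linarith only [hc1, hD0]
    · -- bound the second counter's endpoint difference via the belt
      have hnk : ((pairAt A₁ A₂ w k).2.2.1 : ℤ) ≤ ((pairAt A₁ A₂ w i).2.2.1 : ℤ)
          + 2 * (6 * (K:ℤ) ^ 4) := by
        rcases le_total ((pairAt A₁ A₂ w k).2.2.1 : ℤ) ((pairAt A₁ A₂ w i).2.2.1 : ℤ)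
          with hc | hc
        · linarith only [hc, hD0]
        · have hmul : (1:ℤ) * (((pairAt A₁ A₂ w k).2.2.1 : ℤ)
              - ((pairAt A₁ A₂ w i).2.2.1 : ℤ)) ≤ (β:ℤ) *
              (((pairAt A₁ A₂ w k).2.2.1 : ℤ) - ((pairAt A₁ A₂ w i).2.2.1 : ℤ)) :=
            mul_le_mul_of_nonneg_right hβz (by linarith only [hc])
          linarith only [hmul, hbi.2, hbk.1, hendz]
      have hmax : max ((pairAt A₁ A₂ w i).2.2.1 : ℤ) ((pairAt A₁ A₂ w k).2.2.1 : ℤ)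
          ≤ ((pairAt A₁ A₂ w i).2.2.1 : ℤ) + 2 * (6 * (K:ℤ) ^ 4) :=
        max_le (by linarith only [hD0]) hnk
      linarith only [hc2, hmax]
  · have hendz : ((pairAt A₁ A₂ w i).2.2.1 : ℤ) = ((pairAt A₁ A₂ w k).2.2.1 : ℤ) := by
      exact_mod_cast hend
    rw [← hendz, max_self] at hc2
    rw [← hendz] at hbk
    constructor
    · have hmk : ((pairAt A₁ A₂ w k).1.2.1 : ℤ) ≤ ((pairAt A₁ A₂ w i).1.2.1 : ℤ)
          + 2 * (6 * (K:ℤ) ^ 4) := by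
        rcases le_total ((pairAt A₁ A₂ w k).1.2.1 : ℤ) ((pairAt A₁ A₂ w i).1.2.1 : ℤ)
          with hc | hc
        · linarith only [hc, hD0]
        · have hmul : (1:ℤ) * (((pairAt A₁ A₂ w k).1.2.1 : ℤ)
              - ((pairAt A₁ A₂ w i).1.2.1 : ℤ)) ≤ (α:ℤ) *
              (((pairAt A₁ A₂ w k).1.2.1 : ℤ) - ((pairAt A₁ A₂ w i).1.2.1 : ℤ)) :=
            mul_le_mul_of_nonneg_right hαz (by linarith only [hc])
          linarith only [hmul, hbi.1, hbk.2, hendz]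
      have hmax : max ((pairAt A₁ A₂ w i).1.2.1 : ℤ) ((pairAt A₁ A₂ w k).1.2.1 : ℤ)
          ≤ ((pairAt A₁ A₂ w i).1.2.1 : ℤ) + 2 * (6 * (K:ℤ) ^ 4) :=
        max_le (by linarith only [hD0]) hmk
      linarith only [hc1, hmax]
    · linarith only [hc2, hD0]
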